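/- arXiv:2212.06644 — 4 statements merged into one kernel-verified Lean document; each statement's English description precedes it below -/
import Mathlib

section
/- Let T and w be positive integers with T < 2^128 and w < 2^64, and suppose (T · w) mod 2^137 ≥ 2^137 − 2^64. Set n = 1 + ⌊T · w / 2^137⌋, x = 2^137 − ((T · w) mod 2^137) and view T/2^137 and n/w as real numbers. Then |T/2^137 − n/w| = x/(w · 2^137) ≤ 1/(w · 2^73) < 1/(2 w²). -/
set_option maxRecDepth 10000


/-- If `T < 2^128`, `w < 2^64` are positive integers with
`(T * w) % 2^137 ≥ 2^137 - 2^64`, then with `n = 1 + ⌊T*w/2^137⌋` and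
`x = 2^137 - ((T*w) % 2^137)`, the fraction `n/w` approximates `T/2^137`:
`|T/2^137 - n/w| = x/(w * 2^137) ≤ 1/(w * 2^73) < 1/(2*w^2)`. -/
theorem approximation_inequality (T w : ℕ) (hT : 0 < T) (hw : 0 < w)
    (hT' : T < 2 ^ 128) (hw' : w < 2 ^ 64)
    (h : (T * w) % 2 ^ 137 ≥ 2 ^ 137 - 2 ^ 64)
    (n : ℕ) (hn : n = 1 + T * w / 2 ^ 137)
    (x : ℕ) (hx : x = 2 ^ 137 - (T * w) % 2 ^ 137) :
    |(T : ℝ) / 2 ^ 137 - (n : ℝ) / w| = (x : ℝ) / (w * 2 ^ 137) ∧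
    (x : ℝ) / (w * 2 ^ 137) ≤ 1 / (w * 2 ^ 73) ∧
    (1 : ℝ) / (w * 2 ^ 73) < 1 / (2 * w ^ 2) := by
  have hr : (T * w) % 2 ^ 137 < 2 ^ 137 := Nat.mod_lt _ (by norm_num)
  have hrle : (T * w) % 2 ^ 137 ≤ 2 ^ 137 := le_of_lt hr
  have hkey : n * 2 ^ 137 = T * w + x := by
    have hdm : 2 ^ 137 * (T * w / 2 ^ 137) + (T * w) % 2 ^ 137 = T * w :=
      Nat.div_add_mod _ _
    subst hn hx
    omega
  have hx64 : x ≤ 2 ^ 64 := by omega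
  have hwR : (0 : ℝ) < w := by exact_mod_cast hw
  have hkeyR : (n : ℝ) * 2 ^ 137 = T * w + x := by exact_mod_cast hkey
  constructor
  · have : (T : ℝ) / 2 ^ 137 - (n : ℝ) / w = -((x : ℝ) / (w * 2 ^ 137)) := by
      field_simp
      nlinarith [hkeyR]
    rw [this, abs_neg, abs_of_nonneg (by positivity)]
  constructor
  · rw [div_le_div_iff₀ (by positivity) (by positivity)]
    have hx64R : (x : ℝ) ≤ 2 ^ 64 := by exact_mod_cast hx64
    nlinarith [hwR]
  · rw [div_lt_div_iff₀ (by positivity) (by positivity)]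
    have hw'R : (w : ℝ) < 2 ^ 64 := by exact_mod_cast hw'
    nlinarith [hwR]
end

section
/- Let T and w be positive integers with T < 2^128 and w < 2^64, and suppose (T · w) mod 2^137 ≥ 2^137 − 2^64. Set n = 1 + ⌊T · w / 2^137⌋. Then the rational number n/w is a continued-fraction convergent of the rational number T/2^137, i.e., there exists an index k such that n/w equals the k-th convergent of the continued fraction expansion of T/2^137. -/
/-!
With `M = 2^137` and `d = M - (T w mod M)` we have `n M = T w + d` and `1 ≤ d ≤ 2^64`, so
`0 < n/w - T/M = d/(M w) < 1/(2 w²)` because `2 w d < 2^129 < M`. The reduced denominator of `n/w`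
is at most `w`, so Legendre's theorem makes `n/w` a convergent of `T/M`. Legendre's theorem is
applied to `T/M` as a real number; the convergents agree because the cast `ℚ → ℝ` commutes with
the continuant recursion.
-/

namespace GenContFract

section Map

variable {K L : Type*} [DivisionRing K] [DivisionRing L]

def map (f : K →+* L) (g : GenContFract K) : GenContFract L :=
  ⟨f g.h, g.s.map (Pair.map f)⟩

theorem contsAux_map (f : K →+* L) (g : GenContFract K) :
    ∀ n, (g.map f).contsAux n = (g.contsAux n).map f
  | 0 => by simp [contsAux, Pair.map]
  | 1 => by simp [contsAux, Pair.map, map]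
  | n + 2 => by
    have hs : (g.map f).s.get? n = (g.s.get? n).map (Pair.map f) := Stream'.Seq.map_get? _ _ _
    rw [contsAux, contsAux, hs]
    cases g.s.get? n with
    | none => exact contsAux_map f g (n + 1)
    | some gp =>
      simp [contsAux_map f g n, contsAux_map f g (n + 1), nextConts, nextNum, nextDen, Pair.map]

theorem convs_map (f : K →+* L) (g : GenContFract K) (n : ℕ) :
    (g.map f).convs n = f (g.convs n) := by
  simp [convs, nums, dens, conts, Stream'.map, Stream'.tail, Stream'.get, contsAux_map, Pair.map]

end Map

theorem convs_of_ratCast {K : Type*} [Field K] [LinearOrder K] [IsStrictOrderedRing K]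
    [FloorRing K] (q : ℚ) (n : ℕ) :
    (GenContFract.of (q : K)).convs n = ((GenContFract.of q).convs n : K) := by
  rw [← coe_of_rat_eq rfl]
  exact convs_map (Rat.castHom K) (GenContFract.of q) n

end GenContFract

theorem Rat.exists_convs_eq_of_abs_sub_lt {ξ q : ℚ} (h : |ξ - q| < 1 / (2 * (q.den : ℚ) ^ 2)) :
    ∃ n, (GenContFract.of ξ).convs n = q := by
  have hℝ : |(ξ : ℝ) - q| < 1 / (2 * (q.den : ℝ) ^ 2) := by
    have := (Rat.cast_lt (K := ℝ)).2 h
    push_cast at this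
    exact this
  obtain ⟨n, hn⟩ := Real.exists_convs_eq_rat hℝ
  exact ⟨n, by exact_mod_cast (GenContFract.convs_of_ratCast ξ n).symm.trans hn⟩

theorem Rat.exists_convs_eq_div_of_abs_sub_lt {ξ : ℚ} {a : ℤ} {b : ℕ} (hb : 0 < b)
    (h : |ξ - a / b| < 1 / (2 * (b : ℚ) ^ 2)) : ∃ n, (GenContFract.of ξ).convs n = a / b := by
  have hden : ((a : ℚ) / b).den ≤ b := by
    have hdvd : (((a : ℚ) / b).den : ℤ) ∣ b := by
      simpa [Rat.divInt_eq_div] using Rat.den_dvd a b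
    exact_mod_cast Int.le_of_dvd (by exact_mod_cast hb) hdvd
  refine Rat.exists_convs_eq_of_abs_sub_lt (h.trans_le ?_)
  gcongr

theorem abs_div_sub_succ_div_lt_of_mod_ge {T w M e : ℕ} (hw : 0 < w) (he : 2 * w * e < M)
    (h : T * w % M ≥ M - e) :
    |(T : ℚ) / M - ((1 + T * w / M : ℕ) : ℚ) / w| < 1 / (2 * (w : ℚ) ^ 2) := by
  have hdiv := Nat.div_add_mod (T * w) M
  have hr : T * w % M < M := Nat.mod_lt _ (by omega)
  set r := T * w % M
  set m := T * w / M
  have hM : (0 : ℚ) < M := by exact_mod_cast (show 0 < M by omega)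
  have hwQ : (0 : ℚ) < w := by exact_mod_cast hw
  have hdiff : ((1 + m : ℕ) : ℚ) / w - T / M = (M - r) / (M * w) := by
    have : (T : ℚ) * w = M * m + r := by exact_mod_cast hdiv.symm
    field_simp
    push_cast
    linear_combination -this
  have hrQ : (r : ℚ) < M := by exact_mod_cast hr
  have heQ : (M : ℚ) ≤ r + e := by exact_mod_cast (show M ≤ r + e by omega)
  have heM : 2 * (w : ℚ) * e < M := by exact_mod_cast he
  rw [abs_sub_comm, hdiff, abs_of_pos (by positivity),
    div_lt_div_iff₀ (by positivity) (by positivity)]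
  nlinarith

theorem is_convergent_general (T w : ℕ) (hw : 0 < w)
    (hw' : w < 2 ^ 64)
    (h : (T * w) % 2 ^ 137 ≥ 2 ^ 137 - 2 ^ 64)
    (n : ℕ) (hn : n = 1 + T * w / 2 ^ 137) :
    ∃ k : ℕ, (GenContFract.of ((T : ℚ) / 2 ^ 137)).convs k = (n : ℚ) / w := by
  have happrox := abs_div_sub_succ_div_lt_of_mod_ge hw (by omega : 2 * w * 2 ^ 64 < 2 ^ 137) h
  rw [← hn, Nat.cast_pow, Nat.cast_ofNat, ← Int.cast_natCast n] at happrox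
  obtain ⟨k, hk⟩ := Rat.exists_convs_eq_div_of_abs_sub_lt hw happrox
  exact ⟨k, by rwa [Int.cast_natCast] at hk⟩

/-- If `T < 2^128`, `w < 2^64` are positive integers with
`(T * w) % 2^137 ≥ 2^137 - 2^64`, then with `n = 1 + ⌊T*w/2^137⌋`,
the rational number `n/w` is a continued-fraction convergent of `T/2^137`. -/
theorem is_convergent (T w : ℕ) (hT : 0 < T) (hw : 0 < w)
    (hT' : T < 2 ^ 128) (hw' : w < 2 ^ 64)
    (h : (T * w) % 2 ^ 137 ≥ 2 ^ 137 - 2 ^ 64)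
    (n : ℕ) (hn : n = 1 + T * w / 2 ^ 137) :
    ∃ k : ℕ, (GenContFract.of ((T : ℚ) / 2 ^ 137)).convs k = (n : ℚ) / w :=
  is_convergent_general T w hw hw' h n hn
end

section
/- Let T be a positive integer with T < 2^128. Then there exists a positive integer w < 2^64 such that (T · w) mod 2^137 ≥ 2^137 − 2^64 if and only if there exists a continued-fraction convergent p'/q' of the rational number T/2^137, written as a fraction in lowest terms (gcd(p', q') = 1), such that 0 < q' < 2^64 and (T · q') mod 2^137 ≥ 2^137 − 2^64. -/
set_option maxRecDepth 8000

open GenContFract in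
lemma conv_rat_cast (q : ℚ) (n : ℕ) :
    ((GenContFract.of q).convs n : ℝ) = (GenContFract.of (q : ℝ)).convs n := by
  induction n generalizing q with
  | zero =>
      simp only [zeroth_conv_eq_h, of_h_eq_floor, Rat.cast_intCast, Rat.floor_cast]
  | succ n ih =>
      have hf : Int.fract ((q : ℚ) : ℝ) = ((Int.fract q : ℚ) : ℝ) := by
        rw [Int.fract, Int.fract, Rat.cast_sub, Rat.cast_intCast, Rat.floor_cast]
      rw [convs_succ, convs_succ, hf, ← Rat.cast_inv, ← ih, Rat.floor_cast]
      push_cast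
      ring



/-- Proposition 1: for a positive integer `T < 2^128`, there exists a positive
integer `w < 2^64` with `(T*w) mod 2^137 ≥ 2^137 - 2^64` if and only if there is a
continued-fraction convergent `p'/q'` of `T/2^137`, in lowest terms, with
`0 < q' < 2^64` and `(T*q') mod 2^137 ≥ 2^137 - 2^64`. -/
theorem fallback_iff_convergent (T : ℕ) (hT : 0 < T) (hT' : T < 2 ^ 128) :
    (∃ w : ℕ, 0 < w ∧ w < 2 ^ 64 ∧ (T * w) % 2 ^ 137 ≥ 2 ^ 137 - 2 ^ 64) ↔
    (∃ (k : ℕ) (p' : ℤ) (q' : ℕ),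
      (GenContFract.of ((T : ℚ) / 2 ^ 137)).convs k = (p' : ℚ) / (q' : ℚ) ∧
      Nat.gcd p'.natAbs q' = 1 ∧
      0 < q' ∧ q' < 2 ^ 64 ∧
      (T * q') % 2 ^ 137 ≥ 2 ^ 137 - 2 ^ 64) := by
  constructor
  · rintro ⟨w, hw0, hw64, hge⟩
    obtain ⟨p, d, key, hd1, hdM, hp1⟩ :
        ∃ p d : ℕ, p * 2 ^ 137 = T * w + d ∧ 1 ≤ d ∧ d ≤ 2 ^ 64 ∧ 1 ≤ p := by
      refine ⟨T * w / 2 ^ 137 + 1, 2 ^ 137 - T * w % 2 ^ 137, ?_, ?_, ?_, ?_⟩ <;>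
      · have h1 := Nat.div_add_mod (T * w) (2 ^ 137)
        have h2 : T * w % 2 ^ 137 < 2 ^ 137 := Nat.mod_lt _ (by positivity)
        have h3 : 2 ^ 137 - 2 ^ 64 ≤ T * w % 2 ^ 137 := hge
        omega
    set q : ℚ := (p : ℚ) / (w : ℚ) with hq
    have hwQ : (w : ℚ) ≠ 0 := by positivity
    have hden_dvd : q.den ∣ w := by
      have h2 : q = Rat.divInt (p : ℤ) (w : ℤ) := by
        rw [Rat.divInt_eq_div]; push_cast; rfl
      have h3 := Rat.den_dvd (p : ℤ) (w : ℤ)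
      rw [← h2] at h3
      exact_mod_cast h3
    have hdenw : q.den ≤ w := Nat.le_of_dvd hw0 hden_dvd
    have hden64 : q.den < 2 ^ 64 := lt_of_le_of_lt hdenw hw64
    -- Legendre hypothesis
    have hwR : (0 : ℝ) < w := by exact_mod_cast hw0
    have hkeyR : (p : ℝ) * 2 ^ 137 = T * w + d := by exact_mod_cast key
    have hqcast : ((q : ℚ) : ℝ) = (p : ℝ) / (w : ℝ) := by rw [hq]; push_cast; ring
    have hdiff : (T : ℝ) / 2 ^ 137 - ((q : ℚ) : ℝ) = -((d : ℝ) / (2 ^ 137 * w)) := by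
      rw [hqcast]
      field_simp
      linarith [hkeyR]
    have habs : |(T : ℝ) / 2 ^ 137 - ((q : ℚ) : ℝ)| = (d : ℝ) / (2 ^ 137 * w) := by
      rw [hdiff, abs_neg, abs_of_nonneg (by positivity)]
    have hleg : |(T : ℝ) / 2 ^ 137 - ((q : ℚ) : ℝ)| < 1 / (2 * (q.den : ℝ) ^ 2) := by
      rw [habs, div_lt_div_iff₀ (by positivity) (by positivity)]
      have hdR : (d : ℝ) ≤ 2 ^ 64 := by exact_mod_cast hdM
      have hdenR : (q.den : ℝ) ≤ (w : ℝ) := by exact_mod_cast hdenw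
      have hw64R : (w : ℝ) < 2 ^ 64 := by exact_mod_cast hw64
      have hden0 : (0 : ℝ) ≤ (q.den : ℝ) := by positivity
      nlinarith [mul_le_mul hdenR hdenR hden0 hwR.le, hwR]
    obtain ⟨n, hn⟩ := Real.exists_convs_eq_rat hleg
    -- transfer to ℚ
    have hnQ : (GenContFract.of ((T : ℚ) / 2 ^ 137)).convs n = q := by
      have hc := conv_rat_cast ((T : ℚ) / 2 ^ 137) n
      have hcast2 : (((T : ℚ) / 2 ^ 137 : ℚ) : ℝ) = (T : ℝ) / 2 ^ 137 := by push_cast; ring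
      rw [hcast2, hn] at hc
      exact_mod_cast hc
    -- arithmetic for q.num, q.den
    have hq0 : 0 < q := by rw [hq]; positivity
    have hnum0 : 0 < q.num := Rat.num_pos.mpr hq0
    obtain ⟨m, hmZ⟩ : ∃ m : ℕ, (m : ℤ) = q.num :=
      ⟨q.num.toNat, Int.toNat_of_nonneg hnum0.le⟩
    have hm0 : 0 < m := by omega
    have hcross : m * w = p * q.den := by
      have h1 : (q.num : ℚ) * w = (p : ℚ) * q.den := by
        have h2 := Rat.num_div_den q
        rw [hq] at h2
        field_simp at h2
        linarith [h2]
      have h3 : ((m : ℤ) : ℚ) * w = (p : ℚ) * q.den := by rw [hmZ]; exact h1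
      exact_mod_cast h3
    obtain ⟨g, hg⟩ := hden_dvd
    have hg0 : 0 < g := by
      rcases Nat.eq_zero_or_pos g with h | h
      · rw [h, Nat.mul_zero] at hg; omega
      · exact h
    have hpm : m * g = p := by
      have h4 : m * g * q.den = p * q.den := by rw [hg] at hcross; linarith [hcross]
      exact Nat.eq_of_mul_eq_mul_right q.pos h4
    have hkey2 : m * g * 2 ^ 137 = T * (q.den * g) + d := by rw [hpm, ← hg]; exact key
    -- pass to ℤ to extract e
    set E : ℤ := (m : ℤ) * 2 ^ 137 - T * q.den with hE
    have hgE : (g : ℤ) * E = d := by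
      have h5 : (m : ℤ) * g * 2 ^ 137 = T * (q.den * g) + d := by exact_mod_cast hkey2
      rw [hE]; ring_nf; ring_nf at h5; linarith [h5]
    have hE1 : 0 < E := by
      have hd0 : (0 : ℤ) < d := by exact_mod_cast hd1
      rcases (mul_pos_iff.mp (hgE ▸ hd0)) with ⟨_, h⟩ | ⟨h, _⟩
      · exact h
      · exfalso
        have hgZ : (0 : ℤ) < g := by exact_mod_cast hg0
        linarith
    have hEM : E ≤ 2 ^ 64 := by
      have h6 : E ≤ (g : ℤ) * E := le_mul_of_one_le_left hE1.le (by exact_mod_cast hg0)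
      have h7 : (d : ℤ) ≤ 2 ^ 64 := by exact_mod_cast hdM
      linarith [hgE ▸ h6]
    have hfinZ : (m : ℤ) * 2 ^ 137 = T * q.den + E := by rw [hE]; ring
    have hmod : (T * q.den) % 2 ^ 137 ≥ 2 ^ 137 - 2 ^ 64 := by omega
    refine ⟨n, q.num, q.den, ?_, q.reduced, q.pos, hden64, hmod⟩
    rw [hnQ]; exact (Rat.num_div_den q).symm
  · rintro ⟨k, p', q', _, _, hq0, hq64, hmod⟩
    exact ⟨q', hq0, hq64, hmod⟩
end

section
/- For every integer q with 56 ≤ q ≤ 308, let s be the unique integer such that 2^127 ≤ 5^q · 2^s < 2^128 and let T = ⌊5^q · 2^s⌋ (the 128 most significant bits of 5^q, normalized to lie in [2^127, 2^128)). Then for every integer w with 2^63 ≤ w < 2^64, (T · w) mod 2^137 < 2^137 − 2^64. -/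
/-!
The integer points `(w, e)` with `T * w ≡ e [ZMOD 2^137]` form a lattice of determinant `2^137`,
and the fallback is triggered exactly when it contains a point with `0 < w < 2^64` and
`-2^64 ≤ e < 0`. A basis `(a₁, b₁), (a₂, -c₂)` with nonnegative `aᵢ`, `b₁, c₂ > 0`,
`b₁ + c₂ > 2^64` and `2^64 * (a₁ + b₁) ≤ 2^137` rules such a point out by a sign analysis of its
coordinates. Such a basis is a pair of consecutive (intermediate) convergents of `T / 2^137`; it is
found by running the continued-fraction algorithm, and checked by the kernel for each `q`.
The normalization forces `s = 127 - ⌊log₂ 5^q⌋`, so `T = 5^q / 2^(⌊log₂ 5^q⌋ - 127)` is computable.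
-/

theorem Int.log_mul_zpow_self {R : Type*} [Field R] [LinearOrder R] [IsStrictOrderedRing R]
    [FloorRing R] {b : ℕ} (hb : 1 < b) {r : R} (hr : 0 < r) (z : ℤ) :
    Int.log b (r * (b : R) ^ z) = Int.log b r + z := by
  have hb₀ : (0 : R) < b := by exact_mod_cast zero_lt_one.trans hb
  have hbz : (0 : R) < (b : R) ^ z := zpow_pos hb₀ z
  apply le_antisymm
  · rw [← Int.lt_add_one_iff, ← Int.lt_zpow_iff_log_lt hb (mul_pos hr hbz),
      add_right_comm, zpow_add₀ hb₀.ne']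
    exact mul_lt_mul_of_pos_right (Int.lt_zpow_succ_log_self hb r) hbz
  · rw [← Int.zpow_le_iff_le_log hb (mul_pos hr hbz), zpow_add₀ hb₀.ne']
    exact mul_le_mul_of_nonneg_right (Int.zpow_log_le_self hb hr) hbz.le

theorem floor_natCast_mul_two_zpow {N p : ℕ} {s : ℤ} (hp : p ≤ Nat.log 2 N)
    (h₁ : (2 : ℚ) ^ p ≤ N * 2 ^ s) (h₂ : (N : ℚ) * 2 ^ s < 2 ^ (p + 1)) :
    ⌊(N : ℚ) * 2 ^ s⌋ = (N / 2 ^ (Nat.log 2 N - p) : ℕ) := by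
  have hN : (0 : ℚ) < N := by
    by_contra! h
    rw [le_antisymm h N.cast_nonneg, zero_mul] at h₁
    exact (pow_pos two_pos p).not_ge h₁
  have hlog : Int.log 2 ((N : ℚ) * 2 ^ s) = p := by
    apply le_antisymm
    · rw [← Int.lt_add_one_iff, ← Int.lt_zpow_iff_log_lt one_lt_two (by positivity)]
      exact_mod_cast h₂
    · rw [← Int.zpow_le_iff_le_log one_lt_two (by positivity)]
      exact_mod_cast h₁
  have hs : s = -((Nat.log 2 N - p : ℕ) : ℤ) := by
    have := Int.log_mul_zpow_self (R := ℚ) one_lt_two hN s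
    push_cast at this
    rw [hlog, Int.log_natCast] at this
    omega
  rw [hs, zpow_neg, zpow_natCast, ← div_eq_mul_inv]
  exact_mod_cast Rat.floor_natCast_div_natCast N (2 ^ (Nat.log 2 N - p))

theorem exists_lattice_coords {T M a₁ b₁ a₂ b₂ w e : ℤ} (hM : M ≠ 0) (h₁ : M ∣ T * a₁ - b₁)
    (h₂ : M ∣ T * a₂ - b₂) (hdet : a₂ * b₁ - a₁ * b₂ = M) (h : M ∣ T * w - e) :
    ∃ x y : ℤ, w = x * a₁ + y * a₂ ∧ e = x * b₁ + y * b₂ := by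
  obtain ⟨x, hx⟩ : M ∣ a₂ * e - b₂ * w := by
    rw [show a₂ * e - b₂ * w = w * (T * a₂ - b₂) - a₂ * (T * w - e) by ring]
    exact dvd_sub (h₂.mul_left w) (h.mul_left a₂)
  obtain ⟨y, hy⟩ : M ∣ b₁ * w - a₁ * e := by
    rw [show b₁ * w - a₁ * e = a₁ * (T * w - e) - w * (T * a₁ - b₁) by ring]
    exact dvd_sub (h.mul_left a₁) (h₁.mul_left w)
  refine ⟨x, y, mul_left_cancel₀ hM ?_, mul_left_cancel₀ hM ?_⟩
  · linear_combination a₁ * hx + a₂ * hy - w * hdet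
  · linear_combination b₁ * hx + b₂ * hy - e * hdet

def GapCertificate (T M W a₁ b₁ a₂ c₂ : ℕ) : Prop :=
  W * (a₁ + b₁) ≤ M ∧ W < b₁ + c₂ ∧ 0 < b₁ ∧ 0 < c₂ ∧ a₂ * b₁ + a₁ * c₂ = M ∧
    b₁ ≡ T * a₁ [MOD M] ∧ M ∣ T * a₂ + c₂

instance (T M W a₁ b₁ a₂ c₂ : ℕ) : Decidable (GapCertificate T M W a₁ b₁ a₂ c₂) := by
  unfold GapCertificate; infer_instance

namespace GapCertificate

variable {T M W a₁ b₁ a₂ c₂ : ℕ}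

theorem modulus_pos (hc : GapCertificate T M W a₁ b₁ a₂ c₂) (hW : 0 < W) : 0 < M :=
  hc.1.trans_lt' (Nat.mul_pos hW (Nat.add_pos_right a₁ hc.2.2.1))

theorem not_dvd (hc : GapCertificate T M W a₁ b₁ a₂ c₂) {w e : ℤ} (hw₀ : 0 < w) (hw : w < W)
    (he₀ : -W ≤ e) (he : e < 0) : ¬(M : ℤ) ∣ T * w - e := by
  have hM : (0 : ℤ) < M := by exact_mod_cast hc.modulus_pos (by omega)
  obtain ⟨hW, hgap, hb₁, -, hdet, h₁, h₂⟩ := hc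
  have h₁ : (M : ℤ) ∣ T * a₁ - b₁ := by simpa using (Nat.modEq_iff_dvd.mp h₁)
  have h₂ : (M : ℤ) ∣ T * a₂ - -c₂ := by rw [sub_neg_eq_add]; exact_mod_cast h₂
  have hdet : (a₂ : ℤ) * b₁ - a₁ * -c₂ = M := by rw [← hdet]; push_cast; ring
  intro hde
  obtain ⟨x, y, rfl, rfl⟩ := exists_lattice_coords hM.ne' h₁ h₂ hdet hde
  have ha₁ : (0 : ℤ) ≤ a₁ := a₁.cast_nonneg
  have ha₂ : (0 : ℤ) ≤ a₂ := a₂.cast_nonneg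
  have hgap : (W : ℤ) < b₁ + c₂ := by exact_mod_cast hgap
  have hW : (W : ℤ) * (a₁ + b₁) ≤ M := by exact_mod_cast hW
  rcases le_or_gt y 0 with hy | hy
  · rcases le_or_gt x 0 with hx | hx
    · nlinarith
    · nlinarith
  · rcases lt_or_ge x 0 with hx | hx
    · nlinarith
    · -- `b₁ w - a₁ e = y M ≥ M`, while `b₁ w - a₁ e < W (a₁ + b₁) ≤ M`.
      have hyM : y * M = b₁ * (x * a₁ + y * a₂) - a₁ * (x * b₁ + y * -c₂) := by
        rw [← hdet]; ring
      have hM_le : (M : ℤ) ≤ y * M := le_mul_of_one_le_left hM.le hy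
      have hbw : (b₁ : ℤ) * (x * a₁ + y * a₂) < b₁ * W := mul_lt_mul_of_pos_left hw (by omega)
      have hae : (a₁ : ℤ) * -W ≤ a₁ * (x * b₁ + y * -c₂) := mul_le_mul_of_nonneg_left he₀ ha₁
      linarith

theorem emod_lt (hc : GapCertificate T M W a₁ b₁ a₂ c₂) {w : ℤ} (hw₀ : 0 < w) (hw : w < W) :
    T * w % M < M - W := by
  have hM : (0 : ℤ) < M := by exact_mod_cast hc.modulus_pos (by omega)
  by_contra! hcon
  refine hc.not_dvd hw₀ hw (e := T * w % M - M) (by omega)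
    (by linarith [Int.emod_lt_of_pos (T * w) hM]) ⟨T * w / M + 1, ?_⟩
  linarith [Int.emod_add_mul_ediv (T * w) M]

end GapCertificate

/-- One step of the continued-fraction algorithm on a basis `(a₁, b₁), (a₂, -c₂)`. It is only a
search heuristic: correctness rests on `GapCertificate` alone. -/
def reduceBasis : ℕ × ℕ × ℕ × ℕ → ℕ × ℕ × ℕ × ℕ
  | (a₁, b₁, a₂, c₂) =>
    if c₂ < b₁ then (a₁ + (b₁ - 1) / c₂ * a₂, b₁ - (b₁ - 1) / c₂ * c₂, a₂, c₂)
    else (a₁, b₁, a₂ + (c₂ - 1) / b₁ * a₁, c₂ - (c₂ - 1) / b₁ * b₁)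

def searchGapCertificate (T M W : ℕ) : ℕ → ℕ × ℕ × ℕ × ℕ → Bool
  | 0, _ => false
  | n + 1, (a₁, b₁, a₂, c₂) => decide (GapCertificate T M W a₁ b₁ a₂ c₂) ||
      searchGapCertificate T M W n (reduceBasis (a₁, b₁, a₂, c₂))

theorem exists_gapCertificate_of_search {T M W n : ℕ} {v : ℕ × ℕ × ℕ × ℕ}
    (h : searchGapCertificate T M W n v = true) :
    ∃ a₁ b₁ a₂ c₂, GapCertificate T M W a₁ b₁ a₂ c₂ := by
  induction n generalizing v with
  | zero => simp [searchGapCertificate] at h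
  | succ n ih =>
    obtain ⟨a₁, b₁, a₂, c₂⟩ := v
    rw [searchGapCertificate, Bool.or_eq_true, decide_eq_true_iff] at h
    exact h.elim (fun hc => ⟨a₁, b₁, a₂, c₂, hc⟩) ih

def truncatedPowFive (q : ℕ) : ℕ := 5 ^ q / 2 ^ (Nat.log 2 (5 ^ q) - 127)

theorem searchGapCertificate_truncatedPowFive : ∀ q < 309, 56 ≤ q →
    searchGapCertificate (truncatedPowFive q) (2 ^ 137) (2 ^ 64) 64
      (0, 2 ^ 137, 1, 2 ^ 137 - truncatedPowFive q) = true := by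
  decide +kernel

/-- For every integer `q` with `56 ≤ q ≤ 308`, if `s` is the (unique) integer with
`2^127 ≤ 5^q * 2^s < 2^128` and `T = ⌊5^q * 2^s⌋` is the normalized 128-bit truncated
power of five, then for every `w` with `2^63 ≤ w < 2^64`,
`(T * w) mod 2^137 < 2^137 - 2^64`: the fallback is never needed. -/
theorem no_fallback_positive_powers (q : ℤ) (hq : 56 ≤ q) (hq' : q ≤ 308)
    (s : ℤ) (hs : (2 : ℚ) ^ (127 : ℕ) ≤ 5 ^ q * 2 ^ s)
    (hs' : (5 : ℚ) ^ q * 2 ^ s < 2 ^ (128 : ℕ))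
    (T : ℤ) (hT : T = ⌊(5 : ℚ) ^ q * 2 ^ s⌋) :
    ∀ w : ℤ, 2 ^ 63 ≤ w → w < 2 ^ 64 →
      (T * w) % 2 ^ 137 < 2 ^ 137 - 2 ^ 64 := by
  intro w hw₁ hw₂
  lift q to ℕ using by omega
  have hlog : 127 ≤ Nat.log 2 (5 ^ q) :=
    Nat.le_log_of_pow_le one_lt_two ((by norm_num : 2 ^ 127 ≤ 5 ^ 56).trans
      (Nat.pow_le_pow_right (by norm_num) (by exact_mod_cast hq)))
  have h5 : (5 : ℚ) ^ (q : ℤ) = ((5 ^ q : ℕ) : ℚ) := by push_cast; rfl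
  rw [h5] at hs hs' hT
  obtain ⟨a₁, b₁, a₂, c₂, hc⟩ := exists_gapCertificate_of_search
    (searchGapCertificate_truncatedPowFive q (by omega) (by exact_mod_cast hq))
  rw [hT, floor_natCast_mul_two_zpow hlog hs hs']
  exact_mod_cast hc.emod_lt (by omega) (by exact_mod_cast hw₂)
end
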